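/- arXiv:1010.6122 — 4 statements merged into one kernel-verified Lean document; each statement's English description precedes it below -/
import Mathlib

section
/- The kernel k is positive semidefinite: for every n ∈ ℕ, every choice of points x₁, …, xₙ ∈ [0,1] and every choice of real coefficients c₁, …, cₙ, one has ∑_{i=1}^{n} ∑_{j=1}^{n} cᵢ cⱼ k(xᵢ, xⱼ) ≥ 0. -/
/-- The kernel `k(x,y) = 1/3 + (x² + y²)/2 − max(x,y)`. -/
noncomputable def k (x y : ℝ) : ℝ := 1/3 + (x^2 + y^2)/2 - max x y

open MeasureTheory intervalIntegral Set

noncomputable def φ (x t : ℝ) : ℝ := if t ≤ x then t else t - 1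

lemma φ_meas (x : ℝ) : Measurable (φ x) :=
  Measurable.ite measurableSet_Iic measurable_id (measurable_id.sub measurable_const)

lemma φ_bdd (x t : ℝ) : |φ x t| ≤ |t| + 1 := by
  unfold φ; split
  · linarith [abs_nonneg t]
  · calc |t - 1| ≤ |t| + |(1:ℝ)| := abs_sub _ _
    _ = |t| + 1 := by norm_num

lemma ii_mul (x y a b : ℝ) :
    IntervalIntegrable (fun t => φ x t * φ y t) volume a b := by
  rw [intervalIntegrable_iff]
  haveI : IsFiniteMeasure (volume.restrict (Set.uIoc a b)) :=
    ⟨by rw [Measure.restrict_apply_univ]; exact measure_Ioc_lt_top⟩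
  refine (integrable_const ((|a| + |b| + 1) * (|a| + |b| + 1))).mono'
    ((φ_meas x).mul (φ_meas y)).aestronglyMeasurable ?_
  filter_upwards [ae_restrict_mem measurableSet_uIoc] with t ht
  have h1 : |t| ≤ |a| + |b| := by
    have h2 : a ⊓ b ≤ t := le_of_lt ht.1
    have h3 : t ≤ a ⊔ b := ht.2
    have hmin : -(|a| + |b|) ≤ a ⊓ b :=
      le_min (by linarith [neg_abs_le a, abs_nonneg b]) (by linarith [neg_abs_le b, abs_nonneg a])
    have hmax : a ⊔ b ≤ |a| + |b| :=
      max_le (by linarith [le_abs_self a, abs_nonneg b]) (by linarith [le_abs_self b, abs_nonneg a])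
    rw [abs_le]; constructor <;> linarith
  have hb1 : |φ x t| ≤ |a| + |b| + 1 := (φ_bdd x t).trans (by linarith)
  have hb2 : |φ y t| ≤ |a| + |b| + 1 := (φ_bdd y t).trans (by linarith)
  have : |φ x t * φ y t| ≤ (|a| + |b| + 1) * (|a| + |b| + 1) := by
    rw [abs_mul]
    exact mul_le_mul hb1 hb2 (abs_nonneg _) (by positivity)
  simpa [Real.norm_eq_abs, abs_mul] using this

lemma I1 (x : ℝ) : ∫ t in (0:ℝ)..x, t * t = x ^ 3 / 3 := by
  have : ∀ t : ℝ, HasDerivAt (fun s : ℝ => s ^ 3 / 3) (t * t) t := by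
    intro t
    have := (hasDerivAt_pow 3 t).div_const 3
    simpa [mul_comm, mul_assoc] using this.congr_deriv (by ring)
  rw [integral_eq_sub_of_hasDerivAt (fun t _ => this t)
    (by apply Continuous.intervalIntegrable; continuity)]
  ring

lemma I2 (x y : ℝ) : ∫ t in x..y, (t - 1) * t
    = (y ^ 3 / 3 - y ^ 2 / 2) - (x ^ 3 / 3 - x ^ 2 / 2) := by
  have : ∀ t : ℝ, HasDerivAt (fun s : ℝ => s ^ 3 / 3 - s ^ 2 / 2) ((t - 1) * t) t := by
    intro t
    have h := ((hasDerivAt_pow 3 t).div_const 3).sub ((hasDerivAt_pow 2 t).div_const 2)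
    exact h.congr_deriv (by ring)
  rw [integral_eq_sub_of_hasDerivAt (fun t _ => this t)
    (by apply Continuous.intervalIntegrable; continuity)]

lemma I3 (y : ℝ) : ∫ t in y..(1:ℝ), (t - 1) * (t - 1) = -((y - 1) ^ 3 / 3) := by
  have : ∀ t : ℝ, HasDerivAt (fun s : ℝ => (s - 1) ^ 3 / 3) ((t - 1) * (t - 1)) t := by
    intro t
    have h := (((hasDerivAt_id t).sub_const 1).pow 3).div_const 3
    exact h.congr_deriv (by simp only [id_eq]; ring)
  rw [integral_eq_sub_of_hasDerivAt (fun t _ => this t)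
    (by apply Continuous.intervalIntegrable; continuity)]
  ring

noncomputable def k' (x y : ℝ) : ℝ := 1/3 + (x^2 + y^2)/2 - max x y

lemma integral_phi_le (x y : ℝ) (hx : 0 ≤ x) (hxy : x ≤ y) (hy : y ≤ 1) :
    ∫ t in (0:ℝ)..1, φ x t * φ y t = k' x y := by
  have split1 : ∫ t in (0:ℝ)..1, φ x t * φ y t
      = (∫ t in (0:ℝ)..x, φ x t * φ y t) + ∫ t in x..(1:ℝ), φ x t * φ y t :=
    (integral_add_adjacent_intervals (ii_mul x y 0 x) (ii_mul x y x 1)).symm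
  have split2 : ∫ t in x..(1:ℝ), φ x t * φ y t
      = (∫ t in x..y, φ x t * φ y t) + ∫ t in y..(1:ℝ), φ x t * φ y t :=
    (integral_add_adjacent_intervals (ii_mul x y x y) (ii_mul x y y 1)).symm
  have h1 : ∫ t in (0:ℝ)..x, φ x t * φ y t = ∫ t in (0:ℝ)..x, t * t := by
    apply integral_congr
    intro t ht
    rw [Set.uIcc_of_le hx] at ht
    have htx : t ≤ x := ht.2
    have hty : t ≤ y := htx.trans hxy
    simp [φ, htx, hty]
  have h2 : ∫ t in x..y, φ x t * φ y t = ∫ t in x..y, (t - 1) * t := by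
    apply intervalIntegral.integral_congr_ae
    filter_upwards with t ht
    rw [Set.uIoc_of_le hxy] at ht
    have htx : ¬ t ≤ x := not_le.mpr ht.1
    have hty : t ≤ y := ht.2
    simp [φ, htx, hty]
  have h3 : ∫ t in y..(1:ℝ), φ x t * φ y t = ∫ t in y..(1:ℝ), (t - 1) * (t - 1) := by
    apply intervalIntegral.integral_congr_ae
    filter_upwards with t ht
    rw [Set.uIoc_of_le hy] at ht
    have hty : ¬ t ≤ y := not_le.mpr ht.1
    have htx : ¬ t ≤ x := fun h => hty (h.trans hxy)
    simp [φ, htx, hty]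
  rw [split1, split2, h1, h2, h3, I1, I2, I3, k', max_eq_right hxy]
  ring

lemma integral_phi (x y : ℝ) (hx : x ∈ Set.Icc (0:ℝ) 1) (hy : y ∈ Set.Icc (0:ℝ) 1) :
    ∫ t in (0:ℝ)..1, φ x t * φ y t = k' x y := by
  rcases le_total x y with h | h
  · exact integral_phi_le x y hx.1 h hy.2
  · have := integral_phi_le y x hy.1 h hx.2
    rw [show (fun t => φ x t * φ y t) = fun t => φ y t * φ x t from funext fun t => mul_comm _ _]
    rw [this, k', k', max_comm]
    ring

/-- The kernel `k` is positive semidefinite: for every `n`, points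
`x₁, …, xₙ ∈ [0,1]` and real coefficients `c₁, …, cₙ`, one has
`∑ᵢ ∑ⱼ cᵢ cⱼ k(xᵢ, xⱼ) ≥ 0`. -/

theorem kernel_posSemidef (n : ℕ) (x : Fin n → ℝ)
    (hx : ∀ i, x i ∈ Set.Icc (0:ℝ) 1) (c : Fin n → ℝ) :
    0 ≤ ∑ i, ∑ j, c i * c j * k (x i) (x j) := by
  have h1 : ∀ i j : Fin n,
      IntervalIntegrable (fun t => c i * c j * (φ (x i) t * φ (x j) t)) volume 0 1 :=
    fun i j => (ii_mul (x i) (x j) 0 1).const_mul _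
  have key : ∀ i j : Fin n, c i * c j * k (x i) (x j)
      = ∫ t in (0:ℝ)..1, c i * c j * (φ (x i) t * φ (x j) t) := by
    intro i j
    rw [intervalIntegral.integral_const_mul, integral_phi _ _ (hx i) (hx j)]
    rfl
  have h2 : ∀ i : Fin n,
      IntervalIntegrable (fun t => ∑ j, c i * c j * (φ (x i) t * φ (x j) t)) volume 0 1 := by
    intro i
    have := IntervalIntegrable.sum (μ := volume) (a := (0:ℝ)) (b := 1) Finset.univ
      (fun j (_ : j ∈ Finset.univ) => h1 i j)
    have heq : (∑ j : Fin n, fun t => c i * c j * (φ (x i) t * φ (x j) t))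
        = fun t => ∑ j : Fin n, c i * c j * (φ (x i) t * φ (x j) t) := by
      funext t; simp [Finset.sum_apply]
    rwa [heq] at this
  have inner : ∀ i : Fin n,
      (∫ t in (0:ℝ)..1, ∑ j, c i * c j * (φ (x i) t * φ (x j) t))
      = ∑ j, ∫ t in (0:ℝ)..1, c i * c j * (φ (x i) t * φ (x j) t) :=
    fun i => intervalIntegral.integral_finset_sum (fun j _ => h1 i j)
  have outer : (∫ t in (0:ℝ)..1, ∑ i, ∑ j, c i * c j * (φ (x i) t * φ (x j) t))
      = ∑ i, ∫ t in (0:ℝ)..1, ∑ j, c i * c j * (φ (x i) t * φ (x j) t) :=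
    intervalIntegral.integral_finset_sum (fun i _ => h2 i)
  have step1 : ∑ i, ∑ j, c i * c j * k (x i) (x j)
      = ∫ t in (0:ℝ)..1, ∑ i, ∑ j, c i * c j * (φ (x i) t * φ (x j) t) := by
    rw [outer]
    refine Finset.sum_congr rfl fun i _ => ?_
    rw [inner]
    exact Finset.sum_congr rfl fun j _ => key i j
  rw [step1]
  apply intervalIntegral.integral_nonneg zero_le_one
  intro t _
  have hsq : (∑ i, c i * φ (x i) t) ^ 2
      = ∑ i, ∑ j, c i * c j * (φ (x i) t * φ (x j) t) := by
    rw [sq, Finset.sum_mul_sum]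
    exact Finset.sum_congr rfl fun i _ => Finset.sum_congr rfl fun j _ => by ring
  rw [← hsq]
  positivity
end

section
/- Reproducing property of the anchored representation: if f : [0,1] → ℝ is continuously differentiable, then for every x ∈ [0,1], f(x) = ∫₀¹ f(y) dy + ∫₀¹ f′(y) · (y − 𝟙_{(x,1]}(y)) dy, where 𝟙_{(x,1]} denotes the indicator function of the interval (x,1]. (Equivalently, since y ↦ y − 𝟙_{(x,1]}(y) equals ∂_y k(x,y) for y ≠ x, the kernel sections 1 + γ k(x,·) reproduce point evaluation with respect to the inner product ⟨f, g⟩ = (∫₀¹ f)(∫₀¹ g) + γ⁻¹ ∫₀¹ f′ g′.) -/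
/-- Reproducing property of the anchored representation: if `f` is continuously
differentiable on `[0,1]` (with derivative `f'`), then for every `x ∈ [0,1]`,
`f(x) = ∫₀¹ f(y) dy + ∫₀¹ f'(y) (y − 𝟙_{(x,1]}(y)) dy`. -/
theorem reproducing_property (f f' : ℝ → ℝ)
    (hf : ∀ y ∈ Set.Icc (0:ℝ) 1, HasDerivAt f (f' y) y)
    (hf' : ContinuousOn f' (Set.Icc (0:ℝ) 1))
    (x : ℝ) (hx : x ∈ Set.Icc (0:ℝ) 1) :
    f x = (∫ y in (0:ℝ)..1, f y) +
      ∫ y in (0:ℝ)..1, f' y * (y - Set.indicator (Set.Ioc x 1) (fun _ => (1:ℝ)) y) := by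
  obtain ⟨hx0, hx1⟩ := hx
  have huIcc : Set.uIcc (0:ℝ) 1 = Set.Icc 0 1 := Set.uIcc_of_le (by norm_num)
  have hint01 : IntervalIntegrable f' MeasureTheory.volume 0 1 := by
    apply ContinuousOn.intervalIntegrable; rwa [huIcc]
  have hfc : ContinuousOn f (Set.Icc (0:ℝ) 1) := fun y hy =>
    (hf y hy).continuousAt.continuousWithinAt
  have hfint : IntervalIntegrable f MeasureTheory.volume 0 1 := by
    apply ContinuousOn.intervalIntegrable; rwa [huIcc]
  -- ∫₀¹ f'(y)·y = f 1 - ∫₀¹ f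
  have hparts : (∫ y in (0:ℝ)..1, f' y * y) = f 1 - ∫ y in (0:ℝ)..1, f y := by
    have := intervalIntegral.integral_deriv_mul_eq_sub (u := f) (v := fun y => y)
      (u' := f') (v' := fun _ => 1)
      (fun y hy => hf y (huIcc ▸ hy)) (fun y _ => hasDerivAt_id y)
      (by apply ContinuousOn.intervalIntegrable; rwa [huIcc])
      (intervalIntegrable_const)
    have heq : (∫ y in (0:ℝ)..1, (f' y * y + f y * 1)) = f 1 * 1 - f 0 * 0 := this
    have hsplit : (∫ y in (0:ℝ)..1, (f' y * y + f y * 1)) =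
        (∫ y in (0:ℝ)..1, f' y * y) + ∫ y in (0:ℝ)..1, f y := by
      rw [intervalIntegral.integral_add]
      · simp
      · apply ContinuousOn.intervalIntegrable
        exact (hf'.mono (by rw [huIcc])).mul continuousOn_id
      · simpa using hfint
    rw [hsplit] at heq; linarith
  -- ∫₀¹ f' * indicator = ∫ₓ¹ f' = f 1 - f x
  have hind : (∫ y in (0:ℝ)..1, f' y * Set.indicator (Set.Ioc x 1) (fun _ => (1:ℝ)) y)
      = f 1 - f x := by
    have h1 : (fun y => f' y * Set.indicator (Set.Ioc x 1) (fun _ => (1:ℝ)) y)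
        = Set.indicator (Set.Ioc x 1) f' := by
      funext y
      by_cases hy : y ∈ Set.Ioc x 1 <;> simp [Set.indicator_of_mem, Set.indicator_of_notMem, hy]
    rw [h1]
    have h2 : (∫ y in (0:ℝ)..1, Set.indicator (Set.Ioc x 1) f' y)
        = ∫ y in (x:ℝ)..1, f' y := by
      rw [intervalIntegral.integral_of_le (by norm_num : (0:ℝ) ≤ 1),
          intervalIntegral.integral_of_le hx1,
          MeasureTheory.setIntegral_indicator measurableSet_Ioc]
      congr 1
      rw [Set.Ioc_inter_Ioc]
      congr 1 <;> simp [hx0]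
    rw [h2]
    exact intervalIntegral.integral_eq_sub_of_hasDerivAt
      (fun y hy => hf y (Set.Icc_subset_Icc hx0 le_rfl ((Set.uIcc_of_le hx1) ▸ hy)))
      (hint01.mono_set (by rw [huIcc, Set.uIcc_of_le hx1]; exact Set.Icc_subset_Icc hx0 le_rfl))
  have hsplit2 : (∫ y in (0:ℝ)..1, f' y * (y - Set.indicator (Set.Ioc x 1) (fun _ => (1:ℝ)) y))
      = (∫ y in (0:ℝ)..1, f' y * y)
        - ∫ y in (0:ℝ)..1, f' y * Set.indicator (Set.Ioc x 1) (fun _ => (1:ℝ)) y := by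
    rw [← intervalIntegral.integral_sub]
    · congr 1; funext y; ring
    · apply ContinuousOn.intervalIntegrable
      exact (hf'.mono (by rw [huIcc])).mul continuousOn_id
    · have : (fun y => f' y * Set.indicator (Set.Ioc x 1) (fun _ => (1:ℝ)) y)
          = Set.indicator (Set.Ioc x 1) f' := by
        funext y
        by_cases hy : y ∈ Set.Ioc x 1 <;> simp [Set.indicator_of_mem, Set.indicator_of_notMem, hy]
      rw [this, intervalIntegrable_iff_integrableOn_Ioc_of_le (by norm_num : (0:ℝ) ≤ 1)]
      exact hint01.1.indicator measurableSet_Ioc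
  rw [hsplit2, hparts, hind]; ring
end

section
/- Summability of the infinite-dimensional weighted kernel: let (γ_j)_{j ∈ ℕ} be nonnegative reals with ∑_{j=1}^{∞} γ_j < ∞. Then for all x, y ∈ [0,1]^ℕ, the family indexed by finite subsets v ⊂ ℕ given by v ↦ γ_v ∏_{j ∈ v} k(x_j, y_j), where γ_v = ∏_{j ∈ v} γ_j, is absolutely summable, and its sum K(x,y) = ∑_v γ_v ∏_{j ∈ v} k(x_j, y_j) satisfies |K(x,y)| ≤ ∏_{j=1}^{∞} (1 + γ_j/3) ≤ exp((1/3) ∑_{j=1}^{∞} γ_j). -/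
lemma abs_k_le (x y : ℝ) (hx : x ∈ Set.Icc (0:ℝ) 1) (hy : y ∈ Set.Icc (0:ℝ) 1) :
    |k x y| ≤ 1/3 := by
  obtain ⟨hx0, hx1⟩ := hx
  obtain ⟨hy0, hy1⟩ := hy
  rw [abs_le, k]
  rcases max_cases x y with ⟨h, hle⟩ | ⟨h, hle⟩ <;> rw [h] <;>
    constructor <;> nlinarith

/-- Summability of the infinite-dimensional weighted kernel: if the nonnegative
weights `γ_j` are summable, then for all `x, y ∈ [0,1]^ℕ` the family
`v ↦ γ_v ∏_{j ∈ v} k(x_j, y_j)` (over finite subsets `v ⊂ ℕ`, with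
`γ_v = ∏_{j ∈ v} γ_j`) is absolutely summable, and its sum
`K(x,y)` satisfies `|K(x,y)| ≤ ∏_j (1 + γ_j/3) ≤ exp((1/3) ∑_j γ_j)`. -/
theorem infinite_kernel_summable (γ : ℕ → ℝ) (hγ0 : ∀ j, 0 ≤ γ j)
    (hγ : Summable γ) (x y : ℕ → ℝ)
    (hx : ∀ j, x j ∈ Set.Icc (0:ℝ) 1) (hy : ∀ j, y j ∈ Set.Icc (0:ℝ) 1) :
    Summable (fun v : Finset ℕ => |(∏ j ∈ v, γ j) * ∏ j ∈ v, k (x j) (y j)|) ∧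
    |∑' v : Finset ℕ, (∏ j ∈ v, γ j) * ∏ j ∈ v, k (x j) (y j)| ≤
        ∏' j : ℕ, (1 + γ j / 3) ∧
    ∏' j : ℕ, (1 + γ j / 3) ≤ Real.exp ((1/3) * ∑' j : ℕ, γ j) := by
  have hpos : ∀ j : ℕ, (0:ℝ) < 1 + γ j / 3 := fun j => by linarith [hγ0 j]
  have hlog0 : ∀ j : ℕ, (0:ℝ) ≤ Real.log (1 + γ j / 3) :=
    fun j => Real.log_nonneg (by linarith [hγ0 j])
  have hloggle : ∀ j : ℕ, Real.log (1 + γ j / 3) ≤ γ j / 3 := by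
    intro j
    have := Real.log_le_sub_one_of_pos (hpos j)
    linarith
  have hlog : Summable (fun j : ℕ => Real.log (1 + γ j / 3)) :=
    Summable.of_nonneg_of_le hlog0 hloggle (hγ.div_const 3)
  -- the infinite product equals the exponential of the sum of logs
  have hCexp : ∏' j : ℕ, (1 + γ j / 3) =
      Real.exp (∑' j : ℕ, Real.log (1 + γ j / 3)) := by
    have := Real.rexp_tsum_eq_tprod (f := fun n => 1 + γ n / 3) hpos hlog
    exact this.symm
  set C : ℝ := ∏' j : ℕ, (1 + γ j / 3) with hC
  -- finite products are bounded by C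
  have hfin : ∀ T : Finset ℕ, ∏ j ∈ T, (1 + γ j / 3) ≤ C := by
    intro T
    have h1 : ∏ j ∈ T, (1 + γ j / 3) =
        Real.exp (∑ j ∈ T, Real.log (1 + γ j / 3)) := by
      rw [Real.exp_sum]
      exact Finset.prod_congr rfl fun j _ => (Real.exp_log (hpos j)).symm
    rw [h1, hCexp]
    exact Real.exp_le_exp.2 (Summable.sum_le_tsum T (fun j _ => hlog0 j) hlog)
  -- pointwise bound
  have hbound : ∀ v : Finset ℕ,
      |(∏ j ∈ v, γ j) * ∏ j ∈ v, k (x j) (y j)| ≤ ∏ j ∈ v, (γ j / 3) := by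
    intro v
    rw [abs_mul, Finset.abs_prod, Finset.abs_prod]
    calc (∏ j ∈ v, |γ j|) * ∏ j ∈ v, |k (x j) (y j)|
        ≤ (∏ j ∈ v, |γ j|) * ∏ j ∈ v, (1/3 : ℝ) := by
          apply mul_le_mul_of_nonneg_left
          · exact Finset.prod_le_prod (fun j _ => abs_nonneg _)
              (fun j _ => abs_k_le _ _ (hx j) (hy j))
          · exact Finset.prod_nonneg fun j _ => abs_nonneg _
      _ = ∏ j ∈ v, (γ j / 3) := by
          rw [← Finset.prod_mul_distrib]
          exact Finset.prod_congr rfl fun j _ => by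
            rw [abs_of_nonneg (hγ0 j)]; ring
  have hg0 : ∀ v : Finset ℕ, (0:ℝ) ≤ ∏ j ∈ v, (γ j / 3) :=
    fun v => Finset.prod_nonneg fun j _ => div_nonneg (hγ0 j) (by norm_num)
  -- partial sums of the majorant are bounded by C
  have hpartial : ∀ S : Finset (Finset ℕ),
      ∑ v ∈ S, ∏ j ∈ v, (γ j / 3) ≤ C := by
    intro S
    set T : Finset ℕ := S.sup id with hT
    have hsub : S ⊆ T.powerset := by
      intro v hv
      exact Finset.mem_powerset.2 (Finset.le_sup (f := id) hv)
    calc ∑ v ∈ S, ∏ j ∈ v, (γ j / 3)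
        ≤ ∑ v ∈ T.powerset, ∏ j ∈ v, (γ j / 3) :=
          Finset.sum_le_sum_of_subset_of_nonneg hsub (fun v _ _ => hg0 v)
      _ = ∏ j ∈ T, (γ j / 3 + 1) := by
          rw [Finset.prod_add]
          exact Finset.sum_congr rfl fun v hv => by simp
      _ = ∏ j ∈ T, (1 + γ j / 3) := Finset.prod_congr rfl fun j _ => by ring
      _ ≤ C := hfin T
  have hsum_bounds : ∀ S : Finset (Finset ℕ),
      ∑ v ∈ S, |(∏ j ∈ v, γ j) * ∏ j ∈ v, k (x j) (y j)| ≤ C := by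
    intro S
    calc ∑ v ∈ S, |(∏ j ∈ v, γ j) * ∏ j ∈ v, k (x j) (y j)|
        ≤ ∑ v ∈ S, ∏ j ∈ v, (γ j / 3) :=
          Finset.sum_le_sum fun v _ => hbound v
      _ ≤ C := hpartial S
  have hsummable : Summable
      (fun v : Finset ℕ => |(∏ j ∈ v, γ j) * ∏ j ∈ v, k (x j) (y j)|) :=
    summable_of_sum_le (fun v => abs_nonneg _) hsum_bounds
  refine ⟨hsummable, ?_, ?_⟩
  · calc |∑' v : Finset ℕ, (∏ j ∈ v, γ j) * ∏ j ∈ v, k (x j) (y j)|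
        ≤ ∑' v : Finset ℕ, |(∏ j ∈ v, γ j) * ∏ j ∈ v, k (x j) (y j)| :=
by
          have h := norm_tsum_le_tsum_norm
            (f := fun v : Finset ℕ => (∏ j ∈ v, γ j) * ∏ j ∈ v, k (x j) (y j))
            (by simpa only [Real.norm_eq_abs] using hsummable)
          simpa only [Real.norm_eq_abs] using h
      _ ≤ C := Summable.tsum_le_of_sum_le hsummable hsum_bounds
  · refine le_trans (le_of_eq hCexp) ?_
    rw [Real.exp_le_exp]
    calc ∑' j : ℕ, Real.log (1 + γ j / 3)
        ≤ ∑' j : ℕ, γ j / 3 := Summable.tsum_le_tsum hloggle hlog (hγ.div_const 3)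
      _ = (1/3) * ∑' j : ℕ, γ j := by
          rw [tsum_div_const]; ring
end

section
/- The infinite-dimensional weighted kernel K is positive semidefinite: let (γ_j)_{j ∈ ℕ} be nonnegative reals with ∑_{j=1}^{∞} γ_j < ∞, and define K(x,y) = ∑_v γ_v ∏_{j ∈ v} k(x_j, y_j) for x, y ∈ [0,1]^ℕ, where the sum ranges over all finite subsets v ⊂ ℕ and γ_v = ∏_{j ∈ v} γ_j. Then for every n ∈ ℕ, every choice of points x⁽¹⁾, …, x⁽ⁿ⁾ ∈ [0,1]^ℕ and every choice of real coefficients c₁, …, cₙ, one has ∑_{i=1}^{n} ∑_{j=1}^{n} cᵢ cⱼ K(x⁽ⁱ⁾, x⁽ʲ⁾) ≥ 0. -/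
/-- Feature map for `k`: `k x y = ∫ t in 0..1, kf x t * kf y t`. -/
noncomputable def kf (x t : ℝ) : ℝ := if t ≤ x then t else t - 1

lemma kf_measurable (x : ℝ) : Measurable (kf x) :=
  Measurable.ite measurableSet_Iic measurable_id (measurable_id.sub measurable_const)

lemma kf_abs_le (x t : ℝ) : |kf x t| ≤ |t| + 1 := by
  unfold kf
  split_ifs
  · linarith [abs_nonneg t]
  · calc |t - 1| ≤ |t| + |(1:ℝ)| := abs_sub _ _
      _ = |t| + 1 := by norm_num

lemma kf_mul_intervalIntegrable (x y a b : ℝ) :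
    IntervalIntegrable (fun t => kf x t * kf y t) MeasureTheory.volume a b := by
  have hg : IntervalIntegrable (fun t => (|t| + 1) * (|t| + 1)) MeasureTheory.volume a b :=
    (((continuous_abs.add continuous_const).mul
      (continuous_abs.add continuous_const))).intervalIntegrable a b
  rw [intervalIntegrable_iff] at hg ⊢
  apply hg.mono' (((kf_measurable x).mul (kf_measurable y)).aestronglyMeasurable)
  filter_upwards with t
  rw [Real.norm_eq_abs, Pi.mul_apply, abs_mul]
  exact mul_le_mul (kf_abs_le x t) (kf_abs_le y t) (abs_nonneg _)
    (by positivity)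

lemma k_repr_of_le {x y : ℝ} (hx0 : 0 ≤ x) (hxy : x ≤ y) (hy1 : y ≤ 1) :
    k x y = ∫ t in (0:ℝ)..1, kf x t * kf y t := by
  have hy0 : 0 ≤ y := hx0.trans hxy
  have hx1 : x ≤ 1 := hxy.trans hy1
  have h1 : (∫ t in (0:ℝ)..x, kf x t * kf y t) = ∫ t in (0:ℝ)..x, t * t := by
    rw [intervalIntegral.integral_of_le hx0, intervalIntegral.integral_of_le hx0]
    apply MeasureTheory.setIntegral_congr_fun measurableSet_Ioc
    intro t ht
    have h1 : t ≤ x := ht.2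
    have h2 : t ≤ y := h1.trans hxy
    simp [kf, h1, h2]
  have h2 : (∫ t in x..y, kf x t * kf y t) = ∫ t in x..y, (t - 1) * t := by
    rw [intervalIntegral.integral_of_le hxy, intervalIntegral.integral_of_le hxy]
    apply MeasureTheory.setIntegral_congr_fun measurableSet_Ioc
    intro t ht
    have h1 : ¬ (t ≤ x) := not_le.mpr ht.1
    have h2 : t ≤ y := ht.2
    simp [kf, h1, h2]
  have h3 : (∫ t in y..1, kf x t * kf y t) = ∫ t in y..1, (t - 1) * (t - 1) := by
    rw [intervalIntegral.integral_of_le hy1, intervalIntegral.integral_of_le hy1]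
    apply MeasureTheory.setIntegral_congr_fun measurableSet_Ioc
    intro t ht
    have h1 : ¬ (t ≤ x) := not_le.mpr (lt_of_le_of_lt hxy ht.1)
    have h2 : ¬ (t ≤ y) := not_le.mpr ht.1
    simp [kf, h1, h2]
  have e1 : (∫ t in (0:ℝ)..x, t * t) = x^3/3 := by
    have : (fun t : ℝ => t * t) = fun t : ℝ => t ^ 2 := by funext t; ring
    rw [this, integral_pow]; norm_num
  have e2 : (∫ t in x..y, (t - 1) * t) = (y^3 - x^3)/3 - (y^2 - x^2)/2 := by
    have : (fun t : ℝ => (t - 1) * t) = fun t : ℝ => t ^ 2 - t := by funext t; ring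
    have ha : IntervalIntegrable (fun t : ℝ => t ^ 2) MeasureTheory.volume x y :=
      (continuous_pow 2).intervalIntegrable x y
    have hbb : IntervalIntegrable (fun t : ℝ => t) MeasureTheory.volume x y :=
      continuous_id.intervalIntegrable x y
    rw [this, intervalIntegral.integral_sub ha hbb, integral_pow, integral_id]
    norm_num
  have e3 : (∫ t in y..1, (t - 1) * (t - 1)) = (1 - y^3)/3 - (1 - y^2) + (1 - y) := by
    have : (fun t : ℝ => (t - 1) * (t - 1)) = fun t : ℝ => t ^ 2 - 2 * t + 1 := by
      funext t; ring
    have ha : IntervalIntegrable (fun t : ℝ => t ^ 2 - 2 * t) MeasureTheory.volume y 1 :=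
      ((continuous_pow 2).sub (continuous_const.mul continuous_id)).intervalIntegrable y 1
    have hbb : IntervalIntegrable (fun _ : ℝ => (1:ℝ)) MeasureTheory.volume y 1 :=
      continuous_const.intervalIntegrable y 1
    have hc : IntervalIntegrable (fun t : ℝ => t ^ 2) MeasureTheory.volume y 1 :=
      (continuous_pow 2).intervalIntegrable y 1
    have hd : IntervalIntegrable (fun t : ℝ => 2 * t) MeasureTheory.volume y 1 :=
      (continuous_const.mul continuous_id).intervalIntegrable y 1
    rw [this, intervalIntegral.integral_add ha hbb, intervalIntegral.integral_sub hc hd,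
      integral_pow, intervalIntegral.integral_const_mul, integral_id,
      intervalIntegral.integral_const]
    norm_num; ring
  have split : (∫ t in (0:ℝ)..1, kf x t * kf y t) =
      (∫ t in (0:ℝ)..x, kf x t * kf y t) + (∫ t in x..y, kf x t * kf y t) +
      (∫ t in y..1, kf x t * kf y t) := by
    rw [intervalIntegral.integral_add_adjacent_intervals
      (kf_mul_intervalIntegrable x y 0 x) (kf_mul_intervalIntegrable x y x y),
      intervalIntegral.integral_add_adjacent_intervals
      (kf_mul_intervalIntegrable x y 0 y) (kf_mul_intervalIntegrable x y y 1)]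
  rw [split, h1, h2, h3, e1, e2, e3, k, max_eq_right hxy]
  ring

lemma k_repr {x y : ℝ} (hx : x ∈ Set.Icc (0:ℝ) 1) (hy : y ∈ Set.Icc (0:ℝ) 1) :
    k x y = ∫ t in (0:ℝ)..1, kf x t * kf y t := by
  rcases le_total x y with h | h
  · exact k_repr_of_le hx.1 h hy.2
  · have := k_repr_of_le hy.1 h hx.2
    have hk : k x y = k y x := by unfold k; rw [max_comm]; ring
    rw [hk, this]
    apply intervalIntegral.integral_congr
    intro t _
    exact mul_comm _ _

lemma k_abs_le {x y : ℝ} (hx : x ∈ Set.Icc (0:ℝ) 1) (hy : y ∈ Set.Icc (0:ℝ) 1) :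
    |k x y| ≤ 1 := by
  obtain ⟨hx0, hx1⟩ := hx
  obtain ⟨hy0, hy1⟩ := hy
  rw [abs_le]
  unfold k
  rcases le_total x y with h | h
  · rw [max_eq_right h]; constructor <;> nlinarith
  · rw [max_eq_left h]; constructor <;> nlinarith

/-- The quadratic form of the finite Hadamard-product kernel is nonnegative. -/
lemma Q_nonneg (n : ℕ) (x : Fin n → ℕ → ℝ) (hx : ∀ i j, x i j ∈ Set.Icc (0:ℝ) 1)
    (v : Finset ℕ) :
    ∀ c : Fin n → ℝ, 0 ≤ ∑ i, ∑ j, c i * c j * ∏ l ∈ v, k (x i l) (x j l) := by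
  induction v using Finset.induction_on with
  | empty =>
    intro c
    simp only [Finset.prod_empty, mul_one]
    have : (∑ i, ∑ j, c i * c j) = (∑ i, c i) ^ 2 := by
      rw [sq, Finset.sum_mul_sum]
    rw [this]
    positivity
  | @insert l₀ v hl ih =>
    intro c
    have key : ∀ i j : Fin n, c i * c j * ∏ l ∈ insert l₀ v, k (x i l) (x j l) =
        ∫ t in (0:ℝ)..1, (kf (x i l₀) t * kf (x j l₀) t) *
          (c i * c j * ∏ l ∈ v, k (x i l) (x j l)) := by
      intro i j
      rw [intervalIntegral.integral_mul_const, Finset.prod_insert hl,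
        k_repr (hx i l₀) (hx j l₀)]
      ring
    have hint : ∀ p : Fin n × Fin n, IntervalIntegrable
        (fun t => (kf (x p.1 l₀) t * kf (x p.2 l₀) t) *
          (c p.1 * c p.2 * ∏ l ∈ v, k (x p.1 l) (x p.2 l))) MeasureTheory.volume 0 1 :=
      fun p => (kf_mul_intervalIntegrable _ _ 0 1).mul_const _
    calc (0:ℝ) ≤ ∫ t in (0:ℝ)..1, ∑ p : Fin n × Fin n,
          (kf (x p.1 l₀) t * kf (x p.2 l₀) t) *
            (c p.1 * c p.2 * ∏ l ∈ v, k (x p.1 l) (x p.2 l)) := by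
          apply intervalIntegral.integral_nonneg zero_le_one
          intro t _
          have := ih (fun i => c i * kf (x i l₀) t)
          calc (0:ℝ) ≤ ∑ i, ∑ j, (c i * kf (x i l₀) t) * (c j * kf (x j l₀) t) *
                ∏ l ∈ v, k (x i l) (x j l) := this
            _ = ∑ p : Fin n × Fin n, (kf (x p.1 l₀) t * kf (x p.2 l₀) t) *
                (c p.1 * c p.2 * ∏ l ∈ v, k (x p.1 l) (x p.2 l)) := by
                rw [← Fintype.sum_prod_type']
                apply Finset.sum_congr rfl
                intro p _
                ring
      _ = ∑ p : Fin n × Fin n, ∫ t in (0:ℝ)..1,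
          (kf (x p.1 l₀) t * kf (x p.2 l₀) t) *
            (c p.1 * c p.2 * ∏ l ∈ v, k (x p.1 l) (x p.2 l)) := by
          rw [intervalIntegral.integral_finset_sum (fun p _ => hint p)]
      _ = ∑ i, ∑ j, c i * c j * ∏ l ∈ insert l₀ v, k (x i l) (x j l) := by
          rw [← Fintype.sum_prod_type']
          exact Finset.sum_congr rfl fun p _ => (key p.1 p.2).symm

/-- Summability of products of a summable nonnegative sequence over finite subsets. -/
lemma summable_finsetProd (γ : ℕ → ℝ) (h0 : ∀ j, 0 ≤ γ j) (h : Summable γ) :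
    Summable fun v : Finset ℕ => ∏ l ∈ v, γ l := by
  apply summable_of_sum_le (c := Real.exp (∑' j, γ j))
    (fun v => Finset.prod_nonneg fun l _ => h0 l)
  intro u
  set N := (u.sup fun v => v.sup id) + 1 with hN
  have hsub : u ⊆ (Finset.range N).powerset := by
    intro v hv
    rw [Finset.mem_powerset]
    intro l hl
    rw [Finset.mem_range, hN]
    have : l ≤ v.sup id := Finset.le_sup (f := id) hl
    have : v.sup id ≤ u.sup fun v => v.sup id := Finset.le_sup hv
    omega
  calc ∑ v ∈ u, ∏ l ∈ v, γ l ≤ ∑ v ∈ (Finset.range N).powerset, ∏ l ∈ v, γ l :=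
        Finset.sum_le_sum_of_subset_of_nonneg hsub
          (fun v _ _ => Finset.prod_nonneg fun l _ => h0 l)
    _ = ∏ l ∈ Finset.range N, (γ l + 1) := by
        rw [Finset.prod_add]
        simp
    _ ≤ ∏ l ∈ Finset.range N, Real.exp (γ l) := by
        apply Finset.prod_le_prod (fun l _ => by linarith [h0 l])
        intro l _
        linarith [Real.add_one_le_exp (γ l)]
    _ = Real.exp (∑ l ∈ Finset.range N, γ l) := (Real.exp_sum _ _).symm
    _ ≤ Real.exp (∑' j, γ j) :=
        Real.exp_le_exp.mpr (Summable.sum_le_tsum _ (fun l _ => h0 l) h)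

/-- The infinite-dimensional weighted kernel
`K(x,y) = ∑_v γ_v ∏_{j ∈ v} k(x_j, y_j)` (sum over finite subsets `v ⊂ ℕ`,
`γ_v = ∏_{j ∈ v} γ_j`, with nonnegative summable weights `γ_j`) is positive
semidefinite on `[0,1]^ℕ`. -/
theorem infinite_kernel_posSemidef (γ : ℕ → ℝ) (hγ0 : ∀ j, 0 ≤ γ j)
    (hγ : Summable γ) (n : ℕ) (x : Fin n → ℕ → ℝ)
    (hx : ∀ i j, x i j ∈ Set.Icc (0:ℝ) 1) (c : Fin n → ℝ) :
    0 ≤ ∑ i, ∑ j, c i * c j *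
        ∑' v : Finset ℕ, (∏ l ∈ v, γ l) * ∏ l ∈ v, k (x i l) (x j l) := by
  have hb : Summable (fun v : Finset ℕ => ∏ l ∈ v, γ l) :=
    summable_finsetProd γ hγ0 hγ
  have hsum : ∀ i j : Fin n, Summable (fun v : Finset ℕ =>
      c i * c j * ((∏ l ∈ v, γ l) * ∏ l ∈ v, k (x i l) (x j l))) := by
    intro i j
    apply Summable.of_abs
    refine Summable.of_nonneg_of_le (fun v => abs_nonneg _) (fun v => ?_)
      (hb.mul_left (|c i * c j|))
    rw [abs_mul]
    apply mul_le_mul_of_nonneg_left _ (abs_nonneg _)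
    rw [abs_mul]
    have hγv : (0:ℝ) ≤ ∏ l ∈ v, γ l := Finset.prod_nonneg fun l _ => hγ0 l
    rw [abs_of_nonneg hγv]
    calc (∏ l ∈ v, γ l) * |∏ l ∈ v, k (x i l) (x j l)| ≤ (∏ l ∈ v, γ l) * 1 := by
          apply mul_le_mul_of_nonneg_left _ hγv
          rw [Finset.abs_prod]
          exact Finset.prod_le_one (fun l _ => abs_nonneg _)
            (fun l _ => k_abs_le (hx i l) (hx j l))
      _ = ∏ l ∈ v, γ l := mul_one _
  calc (0:ℝ) ≤ ∑' v : Finset ℕ, ∑ p : Fin n × Fin n,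
        c p.1 * c p.2 * ((∏ l ∈ v, γ l) * ∏ l ∈ v, k (x p.1 l) (x p.2 l)) := by
        apply tsum_nonneg
        intro v
        have hQ := Q_nonneg n x hx v c
        have hγv : (0:ℝ) ≤ ∏ l ∈ v, γ l := Finset.prod_nonneg fun l _ => hγ0 l
        calc (0:ℝ) ≤ (∏ l ∈ v, γ l) *
              ∑ i, ∑ j, c i * c j * ∏ l ∈ v, k (x i l) (x j l) := mul_nonneg hγv hQ
          _ = ∑ p : Fin n × Fin n,
              c p.1 * c p.2 * ((∏ l ∈ v, γ l) * ∏ l ∈ v, k (x p.1 l) (x p.2 l)) := by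
              rw [← Fintype.sum_prod_type', Finset.mul_sum]
              exact Finset.sum_congr rfl fun p _ => by ring
    _ = ∑ p : Fin n × Fin n, ∑' v : Finset ℕ,
        c p.1 * c p.2 * ((∏ l ∈ v, γ l) * ∏ l ∈ v, k (x p.1 l) (x p.2 l)) :=
        Summable.tsum_finsetSum (fun p _ => hsum p.1 p.2)
    _ = ∑ i, ∑ j, c i * c j *
        ∑' v : Finset ℕ, (∏ l ∈ v, γ l) * ∏ l ∈ v, k (x i l) (x j l) := by
        rw [← Fintype.sum_prod_type']
        exact Finset.sum_congr rfl fun p _ => tsum_mul_left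
end
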